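/- Let X₀, X₁ ⊆ ℝ^n (n ≥ 1) be nonempty compact convex, Φ ∈ ℝ^{n×n}, and M symmetric positive definite. Then max_{x₀∈X₀,x₁∈X₁} (Φx₀-x₁)ᵀM⁻¹(Φx₀-x₁) = { max_{y ∈ S^{n-1}} ( h_{X₀}(Φᵀ M^{-1/2} y) + h_{X₁}(-M^{-1/2} y) ) }². -/

import Mathlib

open RealInnerProductSpace Matrix

noncomputable def sptFn {n : ℕ} (K : Set (EuclideanSpace ℝ (Fin n)))
    (y : EuclideanSpace ℝ (Fin n)) : ℝ :=
  sSup ((fun x => ⟪y, x⟫) '' K)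

/-!
Put `A := S⁻¹(ΦX₀ - X₁)`. Since `M⁻¹ = S⁻¹S⁻¹` with `S⁻¹` symmetric, the quadratic form at
`Φx₀ - x₁` is `‖z‖²` for the corresponding `z ∈ A`, and the bracket on the right is the support
function `h_A(y) = h_{X₀}(ΦᵀS⁻¹y) + h_{X₁}(-S⁻¹y)`. Both sides are thus governed by a point `z₀`
of largest norm in the compact set `A`: the left side is `‖z₀‖²`, while on the unit sphere
`h_A(y) ≤ ‖z₀‖` by Cauchy–Schwarz, with equality at `y = z₀ / ‖z₀‖`.
-/

open Set Bornology WithLp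
open scoped Pointwise

theorem Matrix.dotProduct_mul_transpose_inv_mulVec {ι : Type*} [Fintype ι] [DecidableEq ι]
    (S : Matrix ι ι ℝ) (w : ι → ℝ) :
    w ⬝ᵥ (S * Sᵀ)⁻¹ *ᵥ w = ‖toLp 2 (S⁻¹ *ᵥ w)‖ ^ 2 := by
  rw [← real_inner_self_eq_norm_sq, EuclideanSpace.inner_toLp_toLp, star_trivial, mul_inv_rev,
    ← transpose_nonsing_inv, ← mulVec_mulVec, dotProduct_mulVec, vecMul_transpose]

theorem Matrix.inner_toEuclideanLin {m n : Type*} [Fintype m] [DecidableEq m] [Fintype n]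
    [DecidableEq n] (T : Matrix m n ℝ) (y : EuclideanSpace ℝ m) (x : EuclideanSpace ℝ n) :
    ⟪y, toEuclideanLin T x⟫ = ⟪toEuclideanLin Tᵀ y, x⟫ := by
  rw [← conjTranspose_eq_transpose_of_trivial, toEuclideanLin_conjTranspose_eq_adjoint,
    LinearMap.adjoint_inner_left]

theorem bddAbove_inner_image {E : Type*} [NormedAddCommGroup E] [InnerProductSpace ℝ E]
    {K : Set E} (hK : IsBounded K) (y : E) : BddAbove ((fun x => ⟪y, x⟫) '' K) :=
  ((innerSL ℝ y).lipschitz.isBounded_image hK).bddAbove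

section SupportFunction

variable {n : ℕ} {K L : Set (EuclideanSpace ℝ (Fin n))}

theorem inner_le_sptFn (hK : IsBounded K) {a : EuclideanSpace ℝ (Fin n)} (ha : a ∈ K)
    (y : EuclideanSpace ℝ (Fin n)) : ⟪y, a⟫ ≤ sptFn K y :=
  le_csSup (bddAbove_inner_image hK y) (mem_image_of_mem _ ha)

theorem sptFn_le_norm_mul (hK : K.Nonempty) {R : ℝ} (hR : ∀ x ∈ K, ‖x‖ ≤ R)
    (y : EuclideanSpace ℝ (Fin n)) : sptFn K y ≤ ‖y‖ * R :=
  csSup_le (hK.image _) <| forall_mem_image.2 fun x hx =>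
    (real_inner_le_norm y x).trans (mul_le_mul_of_nonneg_left (hR x hx) (norm_nonneg y))

theorem sptFn_add (hK : IsBounded K) (hK' : K.Nonempty) (hL : IsBounded L) (hL' : L.Nonempty)
    (y : EuclideanSpace ℝ (Fin n)) : sptFn (K + L) y = sptFn K y + sptFn L y := by
  rw [sptFn, sptFn, sptFn, ← coe_innerₛₗ_apply, image_add]
  exact csSup_add (hK'.image _) (bddAbove_inner_image hK y) (hL'.image _)
    (bddAbove_inner_image hL y)

theorem sptFn_neg (K : Set (EuclideanSpace ℝ (Fin n))) (y : EuclideanSpace ℝ (Fin n)) :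
    sptFn (-K) y = sptFn K (-y) := by
  simp only [sptFn, ← image_neg_eq_neg, image_image, inner_neg_right, inner_neg_left]

theorem sptFn_sub (hK : IsBounded K) (hK' : K.Nonempty) (hL : IsBounded L) (hL' : L.Nonempty)
    (y : EuclideanSpace ℝ (Fin n)) : sptFn (K - L) y = sptFn K y + sptFn L (-y) := by
  rw [sub_eq_add_neg, sptFn_add hK hK' hL.neg hL'.neg, sptFn_neg]

theorem sptFn_image_toEuclideanLin {m : ℕ} (T : Matrix (Fin m) (Fin n) ℝ)
    (K : Set (EuclideanSpace ℝ (Fin n))) (y : EuclideanSpace ℝ (Fin m)) :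
    sptFn (toEuclideanLin T '' K) y = sptFn K (toEuclideanLin Tᵀ y) := by
  simp only [sptFn, image_image, inner_toEuclideanLin]

theorem sSup_sptFn_sphere_eq_norm {A : Set (EuclideanSpace ℝ (Fin n))}
    {z₀ : EuclideanSpace ℝ (Fin n)} (hz₀ : z₀ ∈ A) (hmax : IsMaxOn (‖·‖) A z₀) :
    sSup (sptFn A '' Metric.sphere 0 1) = ‖z₀‖ := by
  have hbd : IsBounded A := isBounded_iff_forall_norm_le.2 ⟨‖z₀‖, hmax⟩
  have hle : ∀ y ∈ Metric.sphere 0 1, sptFn A y ≤ ‖z₀‖ := fun y hy => by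
    simpa [mem_sphere_zero_iff_norm.1 hy] using sptFn_le_norm_mul ⟨z₀, hz₀⟩ hmax y
  refine le_antisymm (Real.sSup_le (forall_mem_image.2 hle) (norm_nonneg _)) ?_
  rcases eq_or_ne z₀ 0 with rfl | hz₀0
  · rw [norm_zero]
    exact Real.sSup_nonneg <| forall_mem_image.2 fun y _ => by
      simpa using inner_le_sptFn hbd hz₀ y
  · set u := ‖z₀‖⁻¹ • z₀
    have hu : u ∈ Metric.sphere 0 1 := by
      simp [u, norm_smul, hz₀0]
    calc ‖z₀‖ = ⟪u, z₀⟫ := by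
          rw [real_inner_smul_left, real_inner_self_eq_norm_sq]
          field_simp
      _ ≤ sptFn A u := inner_le_sptFn hbd hz₀ u
      _ ≤ sSup (sptFn A '' Metric.sphere 0 1) :=
          le_csSup ⟨_, forall_mem_image.2 hle⟩ (mem_image_of_mem _ hu)

end SupportFunction

theorem max_quadratic_eq_sq_max_support_general {n : ℕ}
    (X₀ X₁ : Set (EuclideanSpace ℝ (Fin n)))
    (h₀ : X₀.Nonempty) (h₁ : X₁.Nonempty)
    (hc₀ : IsCompact X₀) (hc₁ : IsCompact X₁)
    (Φ M S : Matrix (Fin n) (Fin n) ℝ)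
    (hS : S.PosDef) (hSM : S * S = M) :
    sSup {r : ℝ | ∃ x₀ ∈ X₀, ∃ x₁ ∈ X₁,
        r = ((show EuclideanSpace ℝ (Fin n) from WithLp.toLp 2 (Φ.mulVec x₀)) - x₁) ⬝ᵥ
            M⁻¹.mulVec ((show EuclideanSpace ℝ (Fin n) from WithLp.toLp 2 (Φ.mulVec x₀)) - x₁)}
      = (sSup {v : ℝ | ∃ y ∈ Metric.sphere (0 : EuclideanSpace ℝ (Fin n)) 1,
          v = sptFn X₀ (show EuclideanSpace ℝ (Fin n) from WithLp.toLp 2 (Φᵀ.mulVec (S⁻¹.mulVec y)))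
            + sptFn X₁ (show EuclideanSpace ℝ (Fin n) from WithLp.toLp 2 (-(S⁻¹.mulVec y)))}) ^ 2 := by
  have hSt : Sᵀ = S := hS.1
  have hΦX₀ : IsCompact (toEuclideanLin Φ '' X₀) :=
    hc₀.image (toEuclideanLin Φ).continuous_of_finiteDimensional
  set A := toEuclideanLin S⁻¹ '' (toEuclideanLin Φ '' X₀ - X₁) with hA_def
  have hA : IsCompact A :=
    (sub_eq_add_neg (toEuclideanLin Φ '' X₀) X₁ ▸ hΦX₀.add hc₁.neg).image
      (toEuclideanLin S⁻¹).continuous_of_finiteDimensional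
  obtain ⟨z₀, hz₀, hmax⟩ :=
    hA.exists_isMaxOn (((h₀.image _).sub h₁).image _) continuous_norm.continuousOn
  have key : sSup ((‖·‖ ^ 2) '' A) = sSup (sptFn A '' Metric.sphere 0 1) ^ 2 := by
    rw [sSup_sptFn_sphere_eq_norm hz₀ hmax]
    exact IsGreatest.csSup_eq ⟨mem_image_of_mem _ hz₀,
      forall_mem_image.2 fun z hz => pow_le_pow_left₀ (norm_nonneg z) (hmax hz) 2⟩
  have hspt (y : EuclideanSpace ℝ (Fin n)) :
      sptFn A y = sptFn X₀ (toLp 2 (Φᵀ *ᵥ S⁻¹ *ᵥ y)) + sptFn X₁ (toLp 2 (-(S⁻¹ *ᵥ y))) := by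
    rw [sptFn_image_toEuclideanLin, sptFn_sub hΦX₀.isBounded (h₀.image _) hc₁.isBounded h₁,
      sptFn_image_toEuclideanLin, transpose_nonsing_inv, hSt]
    rfl
  convert key using 3
  · rw [hA_def, ← image2_sub, image_image2, image2_image_left, image_image2,
      show M = S * Sᵀ by rw [hSt, hSM]]
    ext r
    simp only [mem_ofPred_eq, mem_image2, ofLp_sub, dotProduct_mul_transpose_inv_mulVec, eq_comm]
    rfl
  · ext v
    simp only [mem_ofPred_eq, mem_image, hspt, eq_comm]

theorem max_quadratic_eq_sq_max_support {n : ℕ} (hn : 1 ≤ n)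
    (X₀ X₁ : Set (EuclideanSpace ℝ (Fin n)))
    (h₀ : X₀.Nonempty) (h₁ : X₁.Nonempty)
    (hc₀ : IsCompact X₀) (hc₁ : IsCompact X₁)
    (hv₀ : Convex ℝ X₀) (hv₁ : Convex ℝ X₁)
    (Φ M S : Matrix (Fin n) (Fin n) ℝ) (hM : M.PosDef)
    (hS : S.PosDef) (hSM : S * S = M) :
    sSup {r : ℝ | ∃ x₀ ∈ X₀, ∃ x₁ ∈ X₁,
        r = ((show EuclideanSpace ℝ (Fin n) from WithLp.toLp 2 (Φ.mulVec x₀)) - x₁) ⬝ᵥ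
            M⁻¹.mulVec ((show EuclideanSpace ℝ (Fin n) from WithLp.toLp 2 (Φ.mulVec x₀)) - x₁)}
      = (sSup {v : ℝ | ∃ y ∈ Metric.sphere (0 : EuclideanSpace ℝ (Fin n)) 1,
          v = sptFn X₀ (show EuclideanSpace ℝ (Fin n) from WithLp.toLp 2 (Φᵀ.mulVec (S⁻¹.mulVec y)))
            + sptFn X₁ (show EuclideanSpace ℝ (Fin n) from WithLp.toLp 2 (-(S⁻¹.mulVec y)))}) ^ 2 :=
  max_quadratic_eq_sq_max_support_general X₀ X₁ h₀ h₁ hc₀ hc₁ Φ M S hS hSM
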